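/- For all integers k ≥ 1 and a ≥ 1, in K[B] one has B_ev^{(2k−1)} · B_ev^{(2a−1)} = [2k+2a−2 choose 2k−1] · ( B_ev^{(2k+2a−2)} + Σ_{ℓ=2}^{k} ( ∏_{m=2}^{ℓ} [2a−2m+2]·[2k−2m+2] / ( [2k+2a−2m+1]·[2m−2] ) ) · (qς)^{ℓ−1} · B_ev^{(2k+2a−2ℓ)} ), where the sum is empty if k < 2. -/

import Mathlib

noncomputable section

open Polynomial Finset

abbrev Kq : Type := RatFunc ℚ

/-- The variable `q` in `ℚ(q)`. -/
def qq : Kq := RatFunc.X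

/-- The quantum integer `[n] = (q^n - q^{-n})/(q - q^{-1})` for `n : ℤ`. -/
def qint (n : ℤ) : Kq := (qq ^ n - qq ^ (-n)) / (qq - qq⁻¹)

/-- The quantum factorial `[n]! = ∏_{i=1}^n [i]`. -/
def qfact (n : ℕ) : Kq := ∏ i ∈ Finset.range n, qint ((i : ℤ) + 1)

/-- The quantum binomial `[n choose m] = [n]!/([m]!·[n-m]!)`. -/
def qbinom (n m : ℕ) : Kq := qfact n / (qfact m * qfact (n - m))

/-- The even ı-divided power `B_ev^{(n)}` in `K[B]`. -/
def BevP (ς : Kq) (n : ℕ) : Polynomial Kq :=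
  if Even n then
    Polynomial.C (qfact n)⁻¹ *
      ∏ j ∈ Finset.range (n / 2),
        ((Polynomial.X : Polynomial Kq) ^ 2 - Polynomial.C (qq * ς * (qint (2 * (j : ℤ))) ^ 2))
  else
    Polynomial.C (qfact n)⁻¹ *
      (Polynomial.X *
        ∏ j ∈ Finset.range (n / 2),
          ((Polynomial.X : Polynomial Kq) ^ 2 - Polynomial.C (qq * ς * (qint (2 * (j : ℤ) + 2)) ^ 2)))

/-- The odd ı-divided power `B_odd^{(n)}` in `K[B]`. -/
def BoddP (ς : Kq) (n : ℕ) : Polynomial Kq :=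
  if Even n then
    Polynomial.C (qfact n)⁻¹ *
      ∏ j ∈ Finset.range (n / 2),
        ((Polynomial.X : Polynomial Kq) ^ 2 - Polynomial.C (qq * ς * (qint (2 * (j : ℤ) + 1)) ^ 2))
  else
    Polynomial.C (qfact n)⁻¹ *
      (Polynomial.X *
        ∏ j ∈ Finset.range (n / 2),
          ((Polynomial.X : Polynomial Kq) ^ 2 - Polynomial.C (qq * ς * (qint (2 * (j : ℤ) + 1)) ^ 2)))

lemma qq_ne : qq ≠ 0 := RatFunc.X_ne_zero

lemma qq_pow_ne_one {m : ℕ} (hm : m ≠ 0) : qq ^ m ≠ 1 := by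
  intro h
  have : (Polynomial.X : Polynomial ℚ) ^ m = 1 := by
    apply IsFractionRing.injective (Polynomial ℚ) (RatFunc ℚ)
    simpa [qq, map_pow, RatFunc.algebraMap_X] using h
  have := congrArg Polynomial.natDegree this
  simp [Polynomial.natDegree_X_pow] at this
  exact hm this

lemma qden_ne : qq - qq⁻¹ ≠ 0 := by
  intro h
  have h2 : qq * qq = 1 := by
    have := sub_eq_zero.mp h
    field_simp [qq_ne] at this
    linear_combination this
  have := qq_pow_ne_one (m := 2) (by norm_num)
  rw [pow_two] at this; exact this h2

lemma qint_zero : qint 0 = 0 := by simp [qint]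

lemma qint_ne_zero {n : ℤ} (h : 0 < n) : qint n ≠ 0 := by
  unfold qint
  apply div_ne_zero _ qden_ne
  intro hz
  have h1 : qq ^ n = qq ^ (-n) := sub_eq_zero.mp hz
  have h2 : qq ^ (2 * n) = 1 := by
    have := congrArg (· * qq ^ n) h1
    rw [← zpow_add₀ qq_ne, ← zpow_add₀ qq_ne] at this
    simpa [two_mul] using this
  lift n to ℕ using le_of_lt h with m
  rw [show ((2:ℤ) * m) = ((2 * m : ℕ) : ℤ) by push_cast; ring, zpow_natCast] at h2
  exact qq_pow_ne_one (by omega) h2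

lemma qint_core (x y t : ℤ) :
    qint x * qint y = qint (x - t) * qint (y - t) + qint t * qint (x + y - t) := by
  unfold qint
  have hq := qq_ne
  rw [div_mul_div_comm, div_mul_div_comm, div_mul_div_comm, ← add_div]
  congr 1
  have e : ∀ m n : ℤ, qq ^ (m - n) = qq ^ m * (qq ^ n)⁻¹ := by
    intro m n; rw [zpow_sub₀ hq, div_eq_mul_inv]
  have e2 : ∀ m n : ℤ, qq ^ (m + n) = qq ^ m * qq ^ n := fun m n => zpow_add₀ hq m n
  have hx : qq ^ x ≠ 0 := zpow_ne_zero _ hq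
  have hy : qq ^ y ≠ 0 := zpow_ne_zero _ hq
  have ht : qq ^ t ≠ 0 := zpow_ne_zero _ hq
  simp only [neg_sub, neg_add, e, e2, zpow_neg]
  generalize qq ^ x = u at *
  generalize qq ^ y = v at *
  generalize qq ^ t = w at *
  field_simp
  ring

lemma qint_sq_sub (p r : ℤ) :
    qint p ^ 2 - qint r ^ 2 = qint (p - r) * qint (p + r) := by
  have h := qint_core p p (p - r)
  rw [show p - (p - r) = r by ring, show p + p - (p - r) = p + r by ring] at h
  linear_combination h

lemma qfact_succ (n : ℕ) : qfact (n + 1) = qfact n * qint ((n : ℤ) + 1) := by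
  simp [qfact, Finset.prod_range_succ]

lemma qfact_ne_zero (n : ℕ) : qfact n ≠ 0 := by
  induction n with
  | zero => simp [qfact]
  | succ m ih =>
    rw [qfact_succ]
    exact mul_ne_zero ih (qint_ne_zero (by positivity))

def Pq (ς : Kq) (n : ℕ) : Polynomial Kq :=
  ∏ j ∈ Finset.range n,
    ((Polynomial.X : Polynomial Kq) ^ 2 - Polynomial.C (qq * ς * (qint (2 * (j : ℤ))) ^ 2))

def Qq (ς : Kq) (n : ℕ) : Polynomial Kq :=
  ∏ j ∈ Finset.range n,
    ((Polynomial.X : Polynomial Kq) ^ 2 - Polynomial.C (qq * ς * (qint (2 * (j : ℤ) + 2)) ^ 2))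

lemma BevP_even (ς : Kq) (n : ℕ) : BevP ς (2 * n) = Polynomial.C (qfact (2 * n))⁻¹ * Pq ς n := by
  rw [BevP, if_pos (even_two_mul n), show 2 * n / 2 = n from by omega]; rfl

lemma BevP_odd (ς : Kq) (n : ℕ) :
    BevP ς (2 * n + 1) = Polynomial.C (qfact (2 * n + 1))⁻¹ * (Polynomial.X * Qq ς n) := by
  rw [BevP, if_neg (by simp [Nat.even_add_one, Nat.even_mul]),
    show (2 * n + 1) / 2 = n from by omega]; rfl

lemma Pq_succ (ς : Kq) (n : ℕ) :
    Pq ς (n + 1) = Pq ς n *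
      ((Polynomial.X : Polynomial Kq) ^ 2 - Polynomial.C (qq * ς * (qint (2 * (n : ℤ))) ^ 2)) := by
  rw [Pq, Finset.prod_range_succ]; rfl

lemma Qq_succ (ς : Kq) (n : ℕ) :
    Qq ς (n + 1) = Qq ς n *
      ((Polynomial.X : Polynomial Kq) ^ 2 - Polynomial.C (qq * ς * (qint (2 * (n : ℤ) + 2)) ^ 2)) := by
  rw [Qq, Finset.prod_range_succ]; rfl

lemma Pq_eq (ς : Kq) (n : ℕ) :
    Pq ς (n + 1) = (Polynomial.X : Polynomial Kq) ^ 2 * Qq ς n := by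
  rw [Pq, Finset.prod_range_succ']
  have h0 : ((Polynomial.X : Polynomial Kq) ^ 2 -
      Polynomial.C (qq * ς * (qint (2 * ((0:ℕ) : ℤ))) ^ 2)) = Polynomial.X ^ 2 := by
    norm_num [qint_zero]
  rw [h0, mul_comm]
  refine congrArg _ ?_
  refine Finset.prod_congr rfl fun j _ => ?_
  have hc : (2 * (((j:ℕ) + 1 : ℕ) : ℤ)) = 2 * (j : ℤ) + 2 := by push_cast; ring
  rw [hc]

def dco (ς : Kq) (k a ℓ : ℕ) : Kq :=
  (∏ m ∈ Finset.Icc 2 ℓ,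
      (qint (2 * (a : ℤ) - 2 * (m : ℤ) + 2) * qint (2 * (k : ℤ) - 2 * (m : ℤ) + 2)) /
        (qint (2 * (k : ℤ) + 2 * (a : ℤ) - 2 * (m : ℤ) + 1) * qint (2 * (m : ℤ) - 2))) *
    (qq * ς) ^ (ℓ - 1)

lemma dco_one (ς : Kq) (k a : ℕ) : dco ς k a 1 = 1 := by
  rw [dco, show Finset.Icc 2 1 = ∅ from rfl]
  simp

lemma dco_succ (ς : Kq) (k a ℓ : ℕ) (hℓ : 1 ≤ ℓ) :
    dco ς k a (ℓ + 1) = dco ς k a ℓ *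
      ((qint (2 * (a : ℤ) - 2 * (ℓ : ℤ)) * qint (2 * (k : ℤ) - 2 * (ℓ : ℤ))) /
        (qint (2 * (k : ℤ) + 2 * (a : ℤ) - 2 * (ℓ : ℤ) - 1) * qint (2 * (ℓ : ℤ)))) *
      (qq * ς) := by
  rw [dco, dco, Finset.prod_Icc_succ_top (by omega : 2 ≤ ℓ + 1),
    show ℓ + 1 - 1 = (ℓ - 1) + 1 from by omega, pow_succ,
    show 2 * (a : ℤ) - 2 * ((ℓ + 1 : ℕ) : ℤ) + 2 = 2 * (a : ℤ) - 2 * (ℓ : ℤ) from by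
      push_cast; ring,
    show 2 * (k : ℤ) - 2 * ((ℓ + 1 : ℕ) : ℤ) + 2 = 2 * (k : ℤ) - 2 * (ℓ : ℤ) from by
      push_cast; ring,
    show 2 * (k : ℤ) + 2 * (a : ℤ) - 2 * ((ℓ + 1 : ℕ) : ℤ) + 1 =
        2 * (k : ℤ) + 2 * (a : ℤ) - 2 * (ℓ : ℤ) - 1 from by push_cast; ring,
    show 2 * ((ℓ + 1 : ℕ) : ℤ) - 2 = 2 * (ℓ : ℤ) from by push_cast; ring]
  ring

lemma dco_ratio (ς : Kq) (k a j : ℕ) (h1 : 1 ≤ j) (hk : j ≤ k) :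
    dco ς (k + 1) a j * (qint (2 * (k : ℤ) - 2 * (j : ℤ) + 2) * qint (2 * (k : ℤ) + 2 * (a : ℤ) - 1)) =
    dco ς k a j * (qint (2 * (k : ℤ)) * qint (2 * (k : ℤ) + 2 * (a : ℤ) - 2 * (j : ℤ) + 1)) := by
  induction j, h1 using Nat.le_induction with
  | base =>
    rw [dco_one, dco_one,
      show 2 * (k : ℤ) - 2 * ((1 : ℕ) : ℤ) + 2 = 2 * (k : ℤ) from by push_cast; ring,
      show 2 * (k : ℤ) + 2 * (a : ℤ) - 2 * ((1 : ℕ) : ℤ) + 1 =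
        2 * (k : ℤ) + 2 * (a : ℤ) - 1 from by push_cast; ring]
  | succ j hj ih =>
    have ih' := ih (by omega)
    rw [dco_succ ς (k+1) a j (by omega), dco_succ ς k a j (by omega),
      show 2 * ((k + 1 : ℕ) : ℤ) - 2 * (j : ℤ) = 2 * (k : ℤ) - 2 * (j : ℤ) + 2 from by
        push_cast; ring,
      show 2 * ((k + 1 : ℕ) : ℤ) + 2 * (a : ℤ) - 2 * (j : ℤ) - 1 =
        2 * (k : ℤ) + 2 * (a : ℤ) - 2 * (j : ℤ) + 1 from by push_cast; ring,
      show 2 * (k : ℤ) - 2 * ((j + 1 : ℕ) : ℤ) + 2 = 2 * (k : ℤ) - 2 * (j : ℤ) from by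
        push_cast; ring,
      show 2 * (k : ℤ) + 2 * (a : ℤ) - 2 * ((j + 1 : ℕ) : ℤ) + 1 =
        2 * (k : ℤ) + 2 * (a : ℤ) - 2 * (j : ℤ) - 1 from by push_cast; ring]
    have n1 : qint (2 * (k : ℤ) + 2 * (a : ℤ) - 2 * (j : ℤ) + 1) ≠ 0 := qint_ne_zero (by omega)
    have n2 : qint (2 * (j : ℤ)) ≠ 0 := qint_ne_zero (by omega)
    have n4 : qint (2 * (k : ℤ) + 2 * (a : ℤ) - 2 * (j : ℤ) - 1) ≠ 0 := qint_ne_zero (by omega)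
    field_simp
    linear_combination
      (qq * ς * qint (2 * (a : ℤ) - 2 * (j : ℤ)) *
        qint (2 * (k : ℤ) - 2 * (j : ℤ))) * ih'

def ec (ς : Kq) (k a ℓ : ℕ) : Kq :=
  qfact (2 * k + 2 * a - 2) / qfact (2 * k + 2 * a - 2 * ℓ) * dco ς k a ℓ

def gc (ς : Kq) (k a ℓ : ℕ) : Kq :=
  qq * ς * (qint (2 * (k : ℤ) + 2 * (a : ℤ) - 2 * (ℓ : ℤ) + 2) ^ 2 - qint (2 * (k : ℤ)) ^ 2) *
    (qfact (2 * k + 2 * a - 2) / qfact (2 * k + 2 * a - 2 * ℓ + 2)) * dco ς k a (ℓ - 1)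

lemma qfact_add_two (n : ℕ) :
    qfact (n + 2) = qfact n * (qint ((n : ℤ) + 1) * qint ((n : ℤ) + 2)) := by
  rw [qfact_succ, qfact_succ, show (((n + 1 : ℕ)) : ℤ) + 1 = (n : ℤ) + 2 from by push_cast; ring]
  ring

lemma ec_one (ς : Kq) (k a : ℕ) : ec ς k a 1 = 1 := by
  rw [ec, dco_one, show 2 * k + 2 * a - 2 * 1 = 2 * k + 2 * a - 2 from by omega,
    div_self (qfact_ne_zero _)]
  ring

lemma ec_mid (ς : Kq) (k a ℓ : ℕ) (hk : 1 ≤ k) (ha : 1 ≤ a) (h2 : 2 ≤ ℓ) (hℓk : ℓ ≤ k) :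
    ec ς (k + 1) a ℓ = ec ς k a ℓ + gc ς k a ℓ := by
  obtain ⟨j, rfl⟩ : ∃ j, ℓ = j + 1 := ⟨ℓ - 1, by omega⟩
  have hj : 1 ≤ j := by omega
  rw [ec, ec, gc, dco_succ ς (k + 1) a j hj, dco_succ ς k a j hj,
    show (j + 1) - 1 = j from by omega]
  -- normalize factorial indices
  rw [show 2 * (k + 1) + 2 * a - 2 = (2 * k + 2 * a - 2) + 2 from by omega,
    show 2 * (k + 1) + 2 * a - 2 * (j + 1) = (2 * k + 2 * a - 2 * (j + 1)) + 2 from by omega,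
    show 2 * k + 2 * a - 2 * (j + 1) + 2 = (2 * k + 2 * a - 2 * (j + 1)) + 2 from by omega,
    qfact_add_two (2 * k + 2 * a - 2), qfact_add_two (2 * k + 2 * a - 2 * (j + 1)),
    show ((2 * k + 2 * a - 2 : ℕ) : ℤ) + 1 = 2 * (k : ℤ) + 2 * (a : ℤ) - 1 from by
      push_cast [Nat.cast_sub (show 2 ≤ 2 * k + 2 * a from by omega)]; ring,
    show ((2 * k + 2 * a - 2 : ℕ) : ℤ) + 2 = 2 * (k : ℤ) + 2 * (a : ℤ) from by
      push_cast [Nat.cast_sub (show 2 ≤ 2 * k + 2 * a from by omega)]; ring,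
    show ((2 * k + 2 * a - 2 * (j + 1) : ℕ) : ℤ) + 1 =
        2 * (k : ℤ) + 2 * (a : ℤ) - 2 * (j : ℤ) - 1 from by
      push_cast [Nat.cast_sub (show 2 * (j + 1) ≤ 2 * k + 2 * a from by omega)]; ring,
    show ((2 * k + 2 * a - 2 * (j + 1) : ℕ) : ℤ) + 2 =
        2 * (k : ℤ) + 2 * (a : ℤ) - 2 * (j : ℤ) from by
      push_cast [Nat.cast_sub (show 2 * (j + 1) ≤ 2 * k + 2 * a from by omega)]; ring]
  -- normalize qint arguments coming from `dco_succ` at `k+1` and from `gc`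
  rw [show 2 * ((k + 1 : ℕ) : ℤ) - 2 * (j : ℤ) = 2 * (k : ℤ) - 2 * (j : ℤ) + 2 from by
      push_cast; ring,
    show 2 * ((k + 1 : ℕ) : ℤ) + 2 * (a : ℤ) - 2 * (j : ℤ) - 1 =
        2 * (k : ℤ) + 2 * (a : ℤ) - 2 * (j : ℤ) + 1 from by push_cast; ring,
    show 2 * (k : ℤ) + 2 * (a : ℤ) - 2 * ((j + 1 : ℕ) : ℤ) + 2 =
        2 * (k : ℤ) + 2 * (a : ℤ) - 2 * (j : ℤ) from by push_cast; ring]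
  have ratio := dco_ratio ς k a j hj (by omega)
  have core := qint_core (2 * (k : ℤ)) (2 * (k : ℤ) + 2 * (a : ℤ)) (2 * (j : ℤ))
  rw [show 2 * (k : ℤ) - 2 * (j : ℤ) = 2 * (k : ℤ) - 2 * (j : ℤ) from rfl,
    show 2 * (k : ℤ) + 2 * (a : ℤ) - 2 * (j : ℤ) = 2 * (k : ℤ) + 2 * (a : ℤ) - 2 * (j : ℤ) from rfl]
    at core
  have hsq := qint_sq_sub (2 * (k : ℤ) + 2 * (a : ℤ) - 2 * (j : ℤ)) (2 * (k : ℤ))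
  rw [show 2 * (k : ℤ) + 2 * (a : ℤ) - 2 * (j : ℤ) - 2 * (k : ℤ) =
        2 * (a : ℤ) - 2 * (j : ℤ) from by ring,
    show 2 * (k : ℤ) + 2 * (a : ℤ) - 2 * (j : ℤ) + 2 * (k : ℤ) =
        2 * (k : ℤ) + 2 * (k : ℤ) + 2 * (a : ℤ) - 2 * (j : ℤ) from by ring] at hsq
  rw [show 2 * (k : ℤ) + (2 * (k : ℤ) + 2 * (a : ℤ)) - 2 * (j : ℤ) =
        2 * (k : ℤ) + 2 * (k : ℤ) + 2 * (a : ℤ) - 2 * (j : ℤ) from by ring] at core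
  have n1 : qint (2 * (k : ℤ) + 2 * (a : ℤ) - 2 * (j : ℤ) + 1) ≠ 0 := qint_ne_zero (by omega)
  have n2 : qint (2 * (j : ℤ)) ≠ 0 := qint_ne_zero (by omega)
  have n3 : qint (2 * (k : ℤ) + 2 * (a : ℤ) - 2 * (j : ℤ) - 1) ≠ 0 := qint_ne_zero (by omega)
  have n4 : qint (2 * (k : ℤ) + 2 * (a : ℤ) - 2 * (j : ℤ)) ≠ 0 := qint_ne_zero (by omega)
  have n5 : qfact (2 * k + 2 * a - 2) ≠ 0 := qfact_ne_zero _
  have n6 : qfact (2 * k + 2 * a - 2 * (j + 1)) ≠ 0 := qfact_ne_zero _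
  field_simp
  set F := qfact (2 * k + 2 * a - 2)
  set G := qfact (2 * k + 2 * a - 2 * (j + 1))
  set d := dco ς k a j
  set ε := qint (2 * (k : ℤ) + 2 * (a : ℤ) - 2 * (j : ℤ) - 1)
  set ζ := qint (2 * (j : ℤ))
  set θ := qint (2 * (k : ℤ) + 2 * (a : ℤ) - 2 * (j : ℤ))
  set κ := qint (2 * (k : ℤ) + 2 * (a : ℤ))
  set α := qint (2 * (a : ℤ) - 2 * (j : ℤ))
  set δ := qint (2 * (k : ℤ) + 2 * (a : ℤ) - 2 * (j : ℤ) + 1)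
  set W := qq * ς
  linear_combination (W * κ * α) * ratio + (W * d * δ * α) * core - (W * d * δ * ζ) * hsq

lemma ec_top (ς : Kq) (k a : ℕ) (hk : 1 ≤ k) (ha : 1 ≤ a) :
    ec ς (k + 1) a (k + 1) = gc ς k a (k + 1) := by
  rw [ec, gc, dco_succ ς (k + 1) a k hk, show (k + 1) - 1 = k from by omega,
    show 2 * (k + 1) + 2 * a - 2 = (2 * k + 2 * a - 2) + 2 from by omega,
    show 2 * (k + 1) + 2 * a - 2 * (k + 1) = 2 * a from by omega,
    show 2 * k + 2 * a - 2 * (k + 1) + 2 = 2 * a from by omega,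
    qfact_add_two (2 * k + 2 * a - 2),
    show ((2 * k + 2 * a - 2 : ℕ) : ℤ) + 1 = 2 * (k : ℤ) + 2 * (a : ℤ) - 1 from by
      push_cast [Nat.cast_sub (show 2 ≤ 2 * k + 2 * a from by omega)]; ring,
    show ((2 * k + 2 * a - 2 : ℕ) : ℤ) + 2 = 2 * (k : ℤ) + 2 * (a : ℤ) from by
      push_cast [Nat.cast_sub (show 2 ≤ 2 * k + 2 * a from by omega)]; ring,
    show 2 * ((k + 1 : ℕ) : ℤ) - 2 * (k : ℤ) = (2 : ℤ) from by push_cast; ring,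
    show 2 * ((k + 1 : ℕ) : ℤ) + 2 * (a : ℤ) - 2 * (k : ℤ) - 1 =
        2 * (a : ℤ) + 1 from by push_cast; ring,
    show 2 * (k : ℤ) + 2 * (a : ℤ) - 2 * ((k + 1 : ℕ) : ℤ) + 2 = 2 * (a : ℤ) from by
      push_cast; ring]
  have ratio := dco_ratio ς k a k hk le_rfl
  rw [show 2 * (k : ℤ) - 2 * (k : ℤ) + 2 = (2 : ℤ) from by ring,
    show 2 * (k : ℤ) + 2 * (a : ℤ) - 2 * (k : ℤ) + 1 = 2 * (a : ℤ) + 1 from by ring] at ratio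
  have hsq := qint_sq_sub (2 * (a : ℤ)) (2 * (k : ℤ))
  rw [show 2 * (a : ℤ) + 2 * (k : ℤ) = 2 * (k : ℤ) + 2 * (a : ℤ) from by ring] at hsq
  have n1 : qint (2 * (a : ℤ) + 1) ≠ 0 := qint_ne_zero (by omega)
  have n2 : qint (2 * (k : ℤ)) ≠ 0 := qint_ne_zero (by omega)
  have n5 : qfact (2 * k + 2 * a - 2) ≠ 0 := qfact_ne_zero _
  have n6 : qfact (2 * a) ≠ 0 := qfact_ne_zero _
  field_simp
  linear_combination
    ((qq * ς) * qint (2 * (a : ℤ) - 2 * (k : ℤ)) *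
      qint (2 * (k : ℤ) + 2 * (a : ℤ))) * ratio -
    ((qq * ς) * dco ς k a k * qint (2 * (a : ℤ) + 1) *
      qint (2 * (k : ℤ))) * hsq

lemma Pq_mul (ς : Kq) (n : ℕ) (u : Kq) :
    Pq ς n * ((Polynomial.X : Polynomial Kq) ^ 2 - Polynomial.C (qq * ς * u ^ 2)) =
      Pq ς (n + 1) + Polynomial.C (qq * ς * (qint (2 * (n : ℤ)) ^ 2 - u ^ 2)) * Pq ς n := by
  rw [Pq_succ, show qq * ς * (qint (2 * (n : ℤ)) ^ 2 - u ^ 2) =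
      qq * ς * qint (2 * (n : ℤ)) ^ 2 - qq * ς * u ^ 2 from by ring, Polynomial.C_sub]
  ring

lemma mainT (ς : Kq) (a : ℕ) (ha : 1 ≤ a) (k : ℕ) (hk : 1 ≤ k) :
    (Polynomial.X : Polynomial Kq) ^ 2 * Qq ς (k - 1) * Qq ς (a - 1) =
      ∑ ℓ ∈ Finset.Icc 1 k, Polynomial.C (ec ς k a ℓ) * Pq ς (k + a - ℓ) := by
  induction k, hk using Nat.le_induction with
  | base =>
    rw [Finset.Icc_self, Finset.sum_singleton, ec_one, show (1 : ℕ) - 1 = 0 from rfl,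
      show 1 + a - 1 = a from by omega, show Qq ς 0 = 1 from by simp [Qq], Polynomial.C_1,
      one_mul, show a = (a - 1) + 1 from by omega, Pq_eq]
    rw [show a - 1 + 1 - 1 = a - 1 from by omega]
    ring
  | succ k hk ih =>
    have hQ : Qq ς k = Qq ς (k - 1) *
        ((Polynomial.X : Polynomial Kq) ^ 2 - Polynomial.C (qq * ς * qint (2 * (k : ℤ)) ^ 2)) := by
      conv_lhs => rw [show k = (k - 1) + 1 from by omega]
      rw [Qq_succ, show 2 * ((k - 1 : ℕ) : ℤ) + 2 = 2 * (k : ℤ) from by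
        push_cast [Nat.cast_sub hk]; ring]
    have step1 : (Polynomial.X : Polynomial Kq) ^ 2 * Qq ς (k + 1 - 1) * Qq ς (a - 1) =
        (∑ ℓ ∈ Finset.Icc 1 k, Polynomial.C (ec ς k a ℓ) * Pq ς (k + a - ℓ)) *
          ((Polynomial.X : Polynomial Kq) ^ 2 - Polynomial.C (qq * ς * qint (2 * (k : ℤ)) ^ 2)) := by
      rw [show k + 1 - 1 = k from by omega, ← ih, hQ]; ring
    rw [step1, Finset.sum_mul]
    have step2 : ∀ ℓ ∈ Finset.Icc 1 k,
        Polynomial.C (ec ς k a ℓ) * Pq ς (k + a - ℓ) *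
          ((Polynomial.X : Polynomial Kq) ^ 2 - Polynomial.C (qq * ς * qint (2 * (k : ℤ)) ^ 2)) =
        Polynomial.C (ec ς k a ℓ) * Pq ς (k + 1 + a - ℓ) +
          Polynomial.C (ec ς k a ℓ *
            (qq * ς * (qint (2 * ((k + a - ℓ : ℕ) : ℤ)) ^ 2 - qint (2 * (k : ℤ)) ^ 2))) *
            Pq ς (k + a - ℓ) := by
      intro ℓ hℓ
      simp only [Finset.mem_Icc] at hℓ
      rw [mul_assoc, Pq_mul, show k + a - ℓ + 1 = k + 1 + a - ℓ from by omega, mul_add,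
        ← mul_assoc, ← Polynomial.C_mul]
    rw [Finset.sum_congr rfl step2, Finset.sum_add_distrib]
    -- reindex the second sum
    have reindex : ∑ ℓ ∈ Finset.Icc 1 k,
        Polynomial.C (ec ς k a ℓ *
          (qq * ς * (qint (2 * ((k + a - ℓ : ℕ) : ℤ)) ^ 2 - qint (2 * (k : ℤ)) ^ 2))) *
          Pq ς (k + a - ℓ) =
        ∑ ℓ ∈ Finset.Icc 2 (k + 1), Polynomial.C (gc ς k a ℓ) * Pq ς (k + 1 + a - ℓ) := by
      rw [show (2 : ℕ) = 1 + 1 from rfl, show k + 1 = k + 1 from rfl,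
        ← Finset.map_add_right_Icc 1 k 1, Finset.sum_map]
      apply Finset.sum_congr rfl
      intro m hm
      simp only [Finset.mem_Icc] at hm
      simp only [addRightEmbedding_apply]
      rw [show k + 1 + a - (m + 1) = k + a - m from by omega]
      congr 1
      rw [gc, show (m + 1) - 1 = m from by omega,
        show 2 * k + 2 * a - 2 * (m + 1) + 2 = 2 * k + 2 * a - 2 * m from by omega,
        show 2 * (k : ℤ) + 2 * (a : ℤ) - 2 * ((m + 1 : ℕ) : ℤ) + 2 =
          2 * ((k + a - m : ℕ) : ℤ) from by
            push_cast [Nat.cast_sub (show m ≤ k + a from by omega)]; ring, ec]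
      ring
    rw [reindex]
    -- now split the target sum
    have htarget : ∑ ℓ ∈ Finset.Icc 1 (k + 1), Polynomial.C (ec ς (k + 1) a ℓ) * Pq ς (k + 1 + a - ℓ) =
        (∑ ℓ ∈ Finset.Icc 1 k, Polynomial.C (ec ς k a ℓ) * Pq ς (k + 1 + a - ℓ)) +
          ∑ ℓ ∈ Finset.Icc 2 (k + 1), Polynomial.C (gc ς k a ℓ) * Pq ς (k + 1 + a - ℓ) := by
      rw [Finset.sum_Icc_succ_top (by omega : 1 ≤ k + 1),
        Finset.sum_Icc_succ_top (by omega : 2 ≤ k + 1), ec_top ς k a hk ha]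
      have hins : Finset.Icc 1 k = insert 1 (Finset.Icc 2 k) := by ext x; simp; omega
      rw [hins, Finset.sum_insert (by simp), Finset.sum_insert (by simp)]
      have hmid : ∀ ℓ ∈ Finset.Icc 2 k,
          Polynomial.C (ec ς (k + 1) a ℓ) * Pq ς (k + 1 + a - ℓ) =
          Polynomial.C (ec ς k a ℓ) * Pq ς (k + 1 + a - ℓ) +
            Polynomial.C (gc ς k a ℓ) * Pq ς (k + 1 + a - ℓ) := by
        intro ℓ hℓ
        simp only [Finset.mem_Icc] at hℓ
        rw [ec_mid ς k a ℓ hk ha hℓ.1 hℓ.2, Polynomial.C_add]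
        ring
      rw [Finset.sum_congr rfl hmid, Finset.sum_add_distrib, ec_one, ec_one]
      ring
    rw [htarget]

/-- Multiplication formula `B_ev^{(2k-1)} B_ev^{(2a-1)}`. -/
theorem Bev_mul_odd_odd (ς : Kq) (hς : ς ≠ 0) (k a : ℕ) (hk : 1 ≤ k) (ha : 1 ≤ a) :
    BevP ς (2 * k - 1) * BevP ς (2 * a - 1) =
    Polynomial.C (qbinom (2 * k + 2 * a - 2) (2 * k - 1)) *
      (BevP ς (2 * k + 2 * a - 2) +
        ∑ ℓ ∈ Finset.Icc 2 k,
          Polynomial.C ((∏ m ∈ Finset.Icc 2 ℓ,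
              (qint (2 * (a : ℤ) - 2 * (m : ℤ) + 2) * qint (2 * (k : ℤ) - 2 * (m : ℤ) + 2)) /
                (qint (2 * (k : ℤ) + 2 * (a : ℤ) - 2 * (m : ℤ) + 1) * qint (2 * (m : ℤ) - 2))) *
            (qq * ς) ^ (ℓ - 1)) *
          BevP ς (2 * k + 2 * a - 2 * ℓ)) := by
  obtain ⟨k', rfl⟩ : ∃ m, k = m + 1 := ⟨k - 1, by omega⟩
  obtain ⟨a', rfl⟩ : ∃ m, a = m + 1 := ⟨a - 1, by omega⟩
  have main := mainT ς (a' + 1) (by omega) (k' + 1) (by omega)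
  rw [show k' + 1 - 1 = k' from by omega, show a' + 1 - 1 = a' from by omega] at main
  have hsum : ∀ ℓ ∈ Finset.Icc 2 (k' + 1),
      Polynomial.C ((∏ m ∈ Finset.Icc 2 ℓ,
          (qint (2 * ((a' + 1 : ℕ) : ℤ) - 2 * (m : ℤ) + 2) *
            qint (2 * ((k' + 1 : ℕ) : ℤ) - 2 * (m : ℤ) + 2)) /
            (qint (2 * ((k' + 1 : ℕ) : ℤ) + 2 * ((a' + 1 : ℕ) : ℤ) - 2 * (m : ℤ) + 1) *
              qint (2 * (m : ℤ) - 2))) * (qq * ς) ^ (ℓ - 1)) *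
        BevP ς (2 * (k' + 1) + 2 * (a' + 1) - 2 * ℓ) =
      Polynomial.C (dco ς (k' + 1) (a' + 1) ℓ) *
        (Polynomial.C (qfact (2 * (k' + 1 + (a' + 1) - ℓ)))⁻¹ * Pq ς (k' + 1 + (a' + 1) - ℓ)) := by
    intro ℓ hℓ
    simp only [Finset.mem_Icc] at hℓ
    rw [show 2 * (k' + 1) + 2 * (a' + 1) - 2 * ℓ = 2 * (k' + 1 + (a' + 1) - ℓ) from by omega,
      BevP_even, dco]
  have scalar : ∀ ℓ ∈ Finset.Icc 1 (k' + 1),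
      Polynomial.C ((qfact (2 * k' + 1))⁻¹ * (qfact (2 * a' + 1))⁻¹) *
          (Polynomial.C (ec ς (k' + 1) (a' + 1) ℓ) * Pq ς (k' + 1 + (a' + 1) - ℓ)) =
      Polynomial.C (qbinom (2 * (k' + 1) + 2 * (a' + 1) - 2) (2 * (k' + 1) - 1)) *
        (Polynomial.C (dco ς (k' + 1) (a' + 1) ℓ) *
          (Polynomial.C (qfact (2 * (k' + 1 + (a' + 1) - ℓ)))⁻¹ * Pq ς (k' + 1 + (a' + 1) - ℓ))) := by
    intro ℓ hℓ
    simp only [Finset.mem_Icc] at hℓ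
    have hC : ∀ (x y : Kq) (P : Polynomial Kq),
        Polynomial.C x * (Polynomial.C y * P) = Polynomial.C (x * y) * P := by
      intro x y P; rw [← mul_assoc, ← Polynomial.C_mul]
    rw [hC, hC, hC]
    congr 1
    rw [ec, qbinom, show 2 * (k' + 1) + 2 * (a' + 1) - 2 - (2 * (k' + 1) - 1) = 2 * a' + 1 from by
        omega,
      show 2 * (k' + 1) - 1 = 2 * k' + 1 from by omega,
      show 2 * (k' + 1) + 2 * (a' + 1) - 2 * ℓ = 2 * (k' + 1 + (a' + 1) - ℓ) from by omega]
    simp only [div_eq_mul_inv, mul_inv]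
    ring
  calc BevP ς (2 * (k' + 1) - 1) * BevP ς (2 * (a' + 1) - 1)
      = Polynomial.C ((qfact (2 * k' + 1))⁻¹ * (qfact (2 * a' + 1))⁻¹) *
          ((Polynomial.X : Polynomial Kq) ^ 2 * Qq ς k' * Qq ς a') := by
        rw [show 2 * (k' + 1) - 1 = 2 * k' + 1 from by omega,
          show 2 * (a' + 1) - 1 = 2 * a' + 1 from by omega, BevP_odd, BevP_odd,
          Polynomial.C_mul]
        ring
    _ = ∑ ℓ ∈ Finset.Icc 1 (k' + 1),
          Polynomial.C ((qfact (2 * k' + 1))⁻¹ * (qfact (2 * a' + 1))⁻¹) *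
            (Polynomial.C (ec ς (k' + 1) (a' + 1) ℓ) * Pq ς (k' + 1 + (a' + 1) - ℓ)) := by
        rw [main, Finset.mul_sum]
    _ = ∑ ℓ ∈ Finset.Icc 1 (k' + 1),
          Polynomial.C (qbinom (2 * (k' + 1) + 2 * (a' + 1) - 2) (2 * (k' + 1) - 1)) *
            (Polynomial.C (dco ς (k' + 1) (a' + 1) ℓ) *
              (Polynomial.C (qfact (2 * (k' + 1 + (a' + 1) - ℓ)))⁻¹ *
                Pq ς (k' + 1 + (a' + 1) - ℓ))) := Finset.sum_congr rfl scalar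
    _ = Polynomial.C (qbinom (2 * (k' + 1) + 2 * (a' + 1) - 2) (2 * (k' + 1) - 1)) *
          (BevP ς (2 * (k' + 1) + 2 * (a' + 1) - 2) +
            ∑ ℓ ∈ Finset.Icc 2 (k' + 1),
              Polynomial.C ((∏ m ∈ Finset.Icc 2 ℓ,
                  (qint (2 * ((a' + 1 : ℕ) : ℤ) - 2 * (m : ℤ) + 2) *
                    qint (2 * ((k' + 1 : ℕ) : ℤ) - 2 * (m : ℤ) + 2)) /
                    (qint (2 * ((k' + 1 : ℕ) : ℤ) + 2 * ((a' + 1 : ℕ) : ℤ) - 2 * (m : ℤ) + 1) *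
                      qint (2 * (m : ℤ) - 2))) * (qq * ς) ^ (ℓ - 1)) *
                BevP ς (2 * (k' + 1) + 2 * (a' + 1) - 2 * ℓ)) := by
        rw [Finset.sum_congr rfl hsum]
        have hins : Finset.Icc 1 (k' + 1) = insert 1 (Finset.Icc 2 (k' + 1)) := by
          ext x; simp; omega
        rw [hins, Finset.sum_insert (by simp), ← Finset.mul_sum, ← mul_add]
        congr 2
        rw [dco_one, Polynomial.C_1, one_mul,
          show k' + 1 + (a' + 1) - 1 = k' + a' + 1 from by omega,
          show 2 * (k' + 1) + 2 * (a' + 1) - 2 = 2 * (k' + a' + 1) from by omega, BevP_even]
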